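/- Let X ∈ Mat_n(k) and let I_n, w₀ be the identity and antidiagonal permutation matrices. For i, j ∈ {1,…,n}, the rank of the top-left (n+i)×(n+j) submatrix of the block matrix [[X, I_n], [w₀, 0]] equals i + j + rank of the bottom-left (n−j)×(n−i) submatrix of X (entries X(r,c) with r > j, c ≤ n−i). -/

import Mathlib

/-!
In the top-left `(n+i) × (n+j)` corner of `[[X, I], [w₀, 0]]`, the `i` rows coming from `w₀` are
standard unit rows (with their `1` in columns `n-i+1, …, n`) and the `j` columns coming from `I`
are standard unit columns (with their `1` in rows `1, …, j`). Permuting rows and columns puts the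
corner in the block form `[[1, 0], [C, [[1, B], [0, Y]]]]`, where `Y` is the submatrix of `X` on
the remaining rows `j+1, …, n` and columns `1, …, n-i`; two Gaussian eliminations against the
identity blocks give rank `i + j + rank Y`.
-/

open Matrix

def w0 (k : Type*) [Field k] (n : ℕ) : Matrix (Fin n) (Fin n) k :=
  Matrix.of fun i j => if j = i.rev then 1 else 0

/-- The `2n × 2n` block matrix `[[X, I], [w₀, 0]]`, reindexed by `Fin (n+n)`. -/
def blockMI {k : Type*} [Field k] {n : ℕ} (X : Matrix (Fin n) (Fin n) k) :
    Matrix (Fin (n + n)) (Fin (n + n)) k :=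
  (Matrix.fromBlocks X 1 (w0 k n) 0).submatrix finSumFinEquiv.symm finSumFinEquiv.symm

theorem Submodule.finrank_prod {R M N : Type*} [Field R] [AddCommGroup M] [AddCommGroup N]
    [Module R M] [Module R N] [FiniteDimensional R M] [FiniteDimensional R N]
    (p : Submodule R M) (q : Submodule R N) :
    Module.finrank R (p.prod q) = Module.finrank R p + Module.finrank R q := by
  have hpq : p.prod q = LinearMap.range (p.subtype.prodMap q.subtype) := by simp
  rw [hpq, LinearMap.finrank_range_of_inj (p.injective_subtype.prodMap q.injective_subtype),
    Module.finrank_prod]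

namespace Matrix

variable {R : Type*} [Field R] {l m n o : Type*} [Fintype l] [Fintype m] [Fintype n] [Fintype o]

theorem rank_fromBlocks_zero_zero (A : Matrix m n R) (D : Matrix l o R) :
    (fromBlocks A 0 0 D).rank = A.rank + D.rank := by
  let eₙ := LinearEquiv.sumArrowLequivProdArrow n o R R
  let eₘ := LinearEquiv.sumArrowLequivProdArrow m l R R
  have hlin : (fromBlocks A 0 0 D).mulVecLin =
      eₘ.symm.toLinearMap ∘ₗ (A.mulVecLin.prodMap D.mulVecLin) ∘ₗ eₙ.toLinearMap := by
    ext x (r | r) <;> simp [eₘ, eₙ, fromBlocks_mulVec, LinearEquiv.sumArrowLequivProdArrow,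
      Equiv.sumArrowEquivProdArrow]
  rw [rank, hlin, LinearMap.range_comp, LinearMap.range_comp_of_range_eq_top _ eₙ.range,
    LinearEquiv.finrank_map_eq, LinearMap.range_prodMap, Submodule.finrank_prod, rank, rank]

variable [DecidableEq m]

theorem rank_fromBlocks_one_zero₁₂ [DecidableEq l] (C : Matrix l m R) (D : Matrix l n R) :
    (fromBlocks (1 : Matrix m m R) 0 C D).rank = Fintype.card m + D.rank := by
  have hfactor : fromBlocks (1 : Matrix m m R) 0 C D =
      fromBlocks 1 0 C (1 : Matrix l l R) * fromBlocks (1 : Matrix m m R) 0 0 D := by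
    simp [fromBlocks_multiply]
  have hunit : IsUnit (fromBlocks (1 : Matrix m m R) 0 C 1).det := by simp
  rw [hfactor, rank_mul_eq_right_of_isUnit_det _ _ hunit, rank_fromBlocks_zero_zero, rank_one]

theorem rank_fromBlocks_one_zero₂₁ [DecidableEq n] (B : Matrix m n R) (D : Matrix l n R) :
    (fromBlocks (1 : Matrix m m R) B 0 D).rank = Fintype.card m + D.rank := by
  rw [← rank_transpose, fromBlocks_transpose, transpose_one, transpose_zero,
    rank_fromBlocks_one_zero₁₂, rank_transpose]

end Matrix

section BlockMI

variable {k : Type*} [Field k] {n : ℕ}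

theorem blockMI_mk (X : Matrix (Fin n) (Fin n) k) {p q : ℕ} (hp : p < n + n) (hq : q < n + n) :
    blockMI X ⟨p, hp⟩ ⟨q, hq⟩ =
      if hp : p < n then
        if hq : q < n then X ⟨p, hp⟩ ⟨q, hq⟩ else if q = n + p then 1 else 0
      else if p + q + 1 = n + n then 1 else 0 := by
  have entry : ∀ p q : Fin (n + n), blockMI X p q =
      if hp : (p : ℕ) < n then
        if hq : (q : ℕ) < n then X ⟨p, hp⟩ ⟨q, hq⟩ else if (q : ℕ) = n + p then 1 else 0
      else if (p : ℕ) + q + 1 = n + n then 1 else 0 := by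
    intro p q
    induction p using Fin.addCases <;> induction q using Fin.addCases <;>
      simp only [blockMI, submatrix_apply, finSumFinEquiv_symm_apply_castAdd,
        finSumFinEquiv_symm_apply_natAdd, fromBlocks_apply₁₁, fromBlocks_apply₁₂,
        fromBlocks_apply₂₁, fromBlocks_apply₂₂] <;>
      simp [w0, one_apply, Fin.ext_iff] <;>
      (try split_ifs) <;> first | rfl | omega
  exact entry ⟨p, hp⟩ ⟨q, hq⟩

variable {i j : ℕ}

noncomputable def topLeftRowEquiv (hj : j ≤ n) : Fin i ⊕ (Fin j ⊕ Fin (n - j)) ≃ Fin (n + i) :=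
  Equiv.ofBijective
    (Sum.elim (fun r => ⟨n + r, by omega⟩)
      (Sum.elim (fun b => ⟨b, by omega⟩) (fun a => ⟨j + a, by omega⟩)))
    ((Fintype.bijective_iff_injective_and_card _).mpr
      ⟨by rintro (r | b | a) (r' | b' | a') h <;> simp [Fin.ext_iff] at h ⊢ <;> omega,
        by simp; omega⟩)

-- Row `n + r` of the corner comes from `w₀` and has its only `1` in column `n - 1 - r`.
noncomputable def topLeftColEquiv (hi : i ≤ n) : Fin i ⊕ (Fin j ⊕ Fin (n - i)) ≃ Fin (n + j) :=
  Equiv.ofBijective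
    (Sum.elim (fun r => ⟨n - 1 - r, by omega⟩)
      (Sum.elim (fun b => ⟨n + b, by omega⟩) (fun c => ⟨c, by omega⟩)))
    ((Fintype.bijective_iff_injective_and_card _).mpr
      ⟨by rintro (r | b | c) (r' | b' | c') h <;> simp [Fin.ext_iff] at h ⊢ <;> omega,
        by simp; omega⟩)

theorem exists_topLeft_submatrix_eq_fromBlocks (X : Matrix (Fin n) (Fin n) k)
    (hi : i ≤ n) (hj : j ≤ n) :
    ∃ C B, ((blockMI X).submatrix (Fin.castLE (Nat.add_le_add_left hi n))
        (Fin.castLE (Nat.add_le_add_left hj n))).submatrix (topLeftRowEquiv hj)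
        (topLeftColEquiv hi) =
      fromBlocks 1 0 C (fromBlocks 1 B 0 (X.submatrix
        (fun a : Fin (n - j) => ⟨j + a, Nat.add_lt_of_lt_sub' a.isLt⟩)
        (Fin.castLE (n.sub_le i)))) := by
  refine ⟨_, _, (fromBlocks_toBlocks _).symm.trans (fromBlocks_inj.mpr ⟨?_, ?_, rfl,
    (fromBlocks_toBlocks _).symm.trans (fromBlocks_inj.mpr ⟨?_, rfl, ?_, ?_⟩)⟩)⟩
  all_goals
    ext r c
    try induction c using Sum.rec
    all_goals
      simp only [toBlocks₁₁, toBlocks₁₂, toBlocks₂₁, toBlocks₂₂, of_apply, submatrix_apply,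
        topLeftRowEquiv, topLeftColEquiv, Equiv.ofBijective_apply, Sum.elim_inl, Sum.elim_inr,
        Fin.castLE_mk, blockMI_mk]
      split_ifs <;> first | rfl | (simp_all [one_apply, Fin.ext_iff] <;> omega)

end BlockMI

/-- The rank of the top-left `(n+i) × (n+j)` submatrix of `[[X, I], [w₀, 0]]` equals
`i + j +` the rank of the submatrix of `X` with rows `> j` and columns `≤ n - i`. -/
theorem stmt_17 {k : Type*} [Field k] {n : ℕ}
    (X : Matrix (Fin n) (Fin n) k)
    (i j : ℕ) (hi' : i ≤ n) (hj' : j ≤ n) :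
    ((blockMI X).submatrix (Fin.castLE (show n + i ≤ n + n by omega))
        (Fin.castLE (show n + j ≤ n + n by omega))).rank =
      i + j + (X.submatrix
          (fun a : Fin (n - j) => (⟨j + (a : ℕ), by omega⟩ : Fin n))
          (Fin.castLE (show n - i ≤ n by omega))).rank := by
  obtain ⟨C, B, hblocks⟩ := exists_topLeft_submatrix_eq_fromBlocks X hi' hj'
  rw [← rank_submatrix _ (topLeftRowEquiv hj') (topLeftColEquiv hi'), hblocks,
    rank_fromBlocks_one_zero₁₂, rank_fromBlocks_one_zero₂₁, Fintype.card_fin, Fintype.card_fin,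
    add_assoc]
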